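/- For every countable ordinal α and every natural number p, there exists a compact countable subset K of the metric space ℚ (with the metric inherited from ℝ) such that the α-th Cantor–Bendixson derivative K^(α) has exactly p elements. -/

import Mathlib

/-!
By induction on `α < ω₁`, every interval `[a, b]` of a dense order contains a countable compact
set `K` with `K^(α) = {a}`. For `α > 0`, list the ordinals below `α` so that each one recurs
infinitely often, and place, in disjoint intervals shrinking to `a`, compact sets realising these
ordinals at their left endpoints; together with `a` they form `K`. Each piece is isolated by an
open interval, so derivatives are computed piecewise: every piece is exhausted by stage `α`,
while for each `β < α` the points that survive to stage `β` accumulate at `a`. Taking `p`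
separated copies of such sets gives `p` points at stage `α`. On closed sets the derivatives agree
with Mathlib's relative iterates `CantorBendixson.iteratedDerivedSet`.
-/

open Ordinal Set

/-- The `α`-th Cantor–Bendixson derivative of a set `A`, defined by transfinite
recursion: `A^(0) = A`, `A^(β+1) = (A^(β))'` (derived set in the ambient space),
and `A^(λ) = ⋂_{γ<λ} A^(γ)` at nonzero limit ordinals. -/
noncomputable def cbDeriv {X : Type*} [TopologicalSpace X] (A : Set X) (o : Ordinal) : Set X :=
  Ordinal.limitRecOn o A (fun _ ih => derivedSet ih)
    (fun o _ ih => ⋂ (β : Ordinal) (h : β < o), ih β h)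

/-- `A` has Cantor–Bendixson characteristic `(α, p)`: `α` is the least ordinal such
that the `α`-th Cantor–Bendixson derivative of `A` is finite, and that derivative has
exactly `p` elements. -/
def HasCBChar {X : Type*} [TopologicalSpace X] (A : Set X) (α : Ordinal) (p : ℕ) : Prop :=
  (cbDeriv A α).Finite ∧ (∀ β < α, ¬ (cbDeriv A β).Finite) ∧ (cbDeriv A α).ncard = p

open Filter Topology CantorBendixson

section DerivedSet

variable {X : Type*} [TopologicalSpace X]

theorem derivedSet_inter_of_isOpen {V : Set X} (hV : IsOpen V) (s : Set X) :
    derivedSet (s ∩ V) ∩ V = derivedSet s ∩ V := by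
  ext x
  simp only [mem_inter_iff, mem_derivedSet, accPt_iff_frequently]
  refine and_congr_left fun hx => ⟨fun h => h.mono fun y hy => ⟨hy.1, hy.2.1⟩, fun h => ?_⟩
  exact (h.and_eventually (hV.mem_nhds hx)).mono fun y hy => ⟨hy.1.1, hy.1.2, hy.2⟩

theorem relDerivedSet_inter_of_isOpen {V : Set X} (hV : IsOpen V) (s : Set X) :
    relDerivedSet (s ∩ V) ∩ V = relDerivedSet s ∩ V := by
  ext x
  have h := congrArg (x ∈ ·) (derivedSet_inter_of_isOpen hV s)
  simp only [relDerivedSet_apply, mem_inter_iff, eq_iff_iff] at h ⊢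
  tauto

@[simp]
theorem relDerivedSet_singleton (x : X) : relDerivedSet {x} = ∅ := by
  ext y
  simp only [relDerivedSet_apply, mem_inter_iff, mem_derivedSet, accPt_iff_frequently,
    mem_singleton_iff, mem_empty_iff_false, iff_false, not_and]
  rintro hy rfl
  obtain ⟨z, hz, rfl⟩ := hy.exists
  exact hz rfl

theorem mem_derivedSet_of_tendsto {s : Set X} {x : X} {u : ℕ → X}
    (hu : Tendsto u atTop (𝓝 x)) (hne : ∀ n, u n ≠ x) (hs : ∃ᶠ n in atTop, u n ∈ s) :
    x ∈ derivedSet s :=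
  accPt_iff_frequently.2 <| hu.frequently <| hs.mono fun n hn => ⟨hne n, hn⟩

theorem isCompact_insert_iUnion {x : X} {S : ℕ → Set X} (hS : ∀ n, IsCompact (S n))
    (hSx : Tendsto S atTop (𝓝 x).smallSets) : IsCompact (insert x (⋃ n, S n)) := by
  intro l hl hle
  by_cases hx : ClusterPt x l
  · exact ⟨x, mem_insert x _, hx⟩
  obtain ⟨U, hU, t, ht, hUt⟩ := inf_eq_bot_iff.1 (not_neBot.1 hx)
  obtain ⟨N, hN⟩ := eventually_atTop.1 (hSx.eventually (eventually_smallSets_subset.2 hU))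
  have hl' : (⋃ n < N, S n) ∈ l := by
    filter_upwards [ht, le_principal_iff.1 hle] with y hyt hy
    have hyU : y ∉ U := fun hyU => hUt.subset ⟨hyU, hyt⟩
    rcases hy with rfl | hy
    · exact absurd (mem_of_mem_nhds hU) hyU
    obtain ⟨n, hn⟩ := mem_iUnion.1 hy
    exact mem_biUnion (not_le.1 fun h => hyU (hN n h hn)) hn
  obtain ⟨y, hy, hyl⟩ :=
    (finite_Iio N).isCompact_biUnion (fun n _ => hS n) (le_principal_iff.2 hl')
  exact ⟨y, subset_insert _ _ (iUnion₂_subset_iUnion _ _ hy), hyl⟩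

end DerivedSet

theorem exists_seq_frequently_eq (β : Type*) [Countable β] [Nonempty β] :
    ∃ f : ℕ → β, ∀ b, ∃ᶠ n in atTop, f n = b := by
  obtain ⟨g, hg⟩ := exists_surjective_nat β
  refine ⟨fun n => g n.unpair.1, fun b => frequently_atTop.2 fun m => ?_⟩
  obtain ⟨k, rfl⟩ := hg b
  exact ⟨Nat.pair k m, Nat.right_le_pair k m, by simp⟩

theorem Ordinal.countable_Iio_of_lt_omega_one {α : Ordinal} (hα : α < ω₁) :
    (Iio α).Countable := by
  rw [← Cardinal.le_aleph0_iff_set_countable, Cardinal.mk_Iio_ordinal, Cardinal.lift_le_aleph0,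
    ← Cardinal.lt_aleph_one_iff, ← Cardinal.lt_omega_iff_card_lt]
  exact hα

namespace CantorBendixson

variable {X : Type*} [TopologicalSpace X] {s t : Set X}

theorem iteratedDerivedSet_subset (a : Ordinal) : sᵈ[a] ⊆ s := by
  simpa using iteratedDerivedSet_antitone s (zero_le : 0 ≤ a)

theorem iteratedDerivedSet_inter_of_isOpen {V : Set X} (hV : IsOpen V) (h : s ∩ V = t ∩ V)
    (a : Ordinal) : sᵈ[a] ∩ V = tᵈ[a] ∩ V := by
  induction a using Ordinal.limitRecOn with
  | zero => simpa using h
  | add_one a ih =>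
    rw [iteratedDerivedSet_succ, iteratedDerivedSet_succ, ← relDerivedSet_inter_of_isOpen hV, ih,
      relDerivedSet_inter_of_isOpen hV]
  | limit a ha ih =>
    ext x
    simp only [iteratedDerivedSet_limit ha, mem_inter_iff, mem_iInter, Subtype.forall, mem_Iio]
    refine and_congr_left fun hx => forall₂_congr fun b hb => ?_
    simpa [hx] using congrArg (x ∈ ·) (ih b hb)

theorem mem_iteratedDerivedSet_iff {x : X} {a : Ordinal} :
    x ∈ sᵈ[a] ↔ x ∈ s ∧ ∀ b < a, x ∈ derivedSet sᵈ[b] := by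
  induction a using Ordinal.limitRecOn with
  | zero => simp
  | add_one a ih =>
    simp only [iteratedDerivedSet_succ, relDerivedSet_apply, mem_inter_iff, ih,
      Order.lt_add_one_iff, le_iff_lt_or_eq, or_imp, forall_and, forall_eq]
    tauto
  | limit a ha ih =>
    simp only [iteratedDerivedSet_limit ha, mem_iInter, Subtype.forall, mem_Iio]
    refine ⟨fun h => ⟨((ih 0 ha.bot_lt).1 (h 0 ha.bot_lt)).1, fun b hb => ?_⟩,
      fun h b hb => (ih b hb).2 ⟨h.1, fun c hc => h.2 c (hc.trans hb)⟩⟩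
    exact ((ih (b + 1) (ha.add_one_lt hb)).1 (h _ (ha.add_one_lt hb))).2 b (lt_add_one b)

end CantorBendixson

section cbDeriv

variable {X : Type*} [TopologicalSpace X] (A : Set X)

@[simp]
theorem cbDeriv_zero : cbDeriv A 0 = A :=
  limitRecOn_zero ..

@[simp]
theorem cbDeriv_add_one (o : Ordinal) : cbDeriv A (o + 1) = derivedSet (cbDeriv A o) :=
  limitRecOn_add_one ..

theorem cbDeriv_limit {o : Ordinal} (ho : Order.IsSuccLimit o) :
    cbDeriv A o = ⋂ b < o, cbDeriv A b :=
  limitRecOn_limit _ _ _ _ ho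

@[simp]
theorem cbDeriv_lift (o : Ordinal) : cbDeriv A (lift o) = cbDeriv A o := by
  induction o using Ordinal.limitRecOn with
  | zero => simp
  | add_one o ih => simp [ih]
  | limit o ho ih =>
    rw [cbDeriv_limit A ho, cbDeriv_limit A (isSuccLimit_lift.2 ho)]
    ext x
    simp only [mem_iInter]
    refine ⟨fun h b hb => ih b hb ▸ h _ (lift_lt.2 hb), fun h c hc => ?_⟩
    obtain ⟨b, hb, rfl⟩ := lt_lift_iff.1 hc
    exact (ih b hb).symm ▸ h b hb

variable {A}

theorem cbDeriv_eq_iteratedDerivedSet (hA : IsClosed A) (o : Ordinal) : cbDeriv A o = Aᵈ[o] := by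
  induction o using Ordinal.limitRecOn with
  | zero => simp
  | add_one o ih =>
    rw [iteratedDerivedSet_succ, (isClosed_iteratedDerivedSet hA o).relDerivedSet_eq, ← ih,
      cbDeriv_add_one]
  | limit o ho ih =>
    rw [iteratedDerivedSet_limit ho, cbDeriv_limit A ho]
    ext x
    simp only [mem_iInter, Subtype.forall, mem_Iio]
    exact forall₂_congr fun b hb => by rw [ih b hb]

end cbDeriv

section Windows

variable {X : Type*} [LinearOrder X] {u : ℕ → X} {C : ℕ → Set X}

theorem biUnion_inter_Ioo_of_subset_Icc (hu : StrictAnti u)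
    (hC : ∀ n, C n ⊆ Icc (u (2 * n + 2)) (u (2 * n + 1))) {S : Set ℕ} {m : ℕ} (hm : m ∈ S) :
    (⋃ n ∈ S, C n) ∩ Ioo (u (2 * m + 3)) (u (2 * m)) = C m ∩ Ioo (u (2 * m + 3)) (u (2 * m)) := by
  refine subset_antisymm ?_ (inter_subset_inter_left _ (subset_biUnion_of_mem hm))
  rintro x ⟨hx, hxV⟩
  obtain ⟨n, -, hxn⟩ := mem_iUnion₂.1 hx
  obtain ⟨hn₁, hn₂⟩ := hC n hxn
  obtain rfl : n = m := by
    by_contra hnm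
    rcases lt_or_gt_of_ne hnm with h | h
    · exact absurd ((hu.antitone (by omega : 2 * n + 2 ≤ 2 * m)).trans hn₁) (not_le.2 hxV.2)
    · exact absurd (hn₂.trans (hu.antitone (by omega : 2 * m + 3 ≤ 2 * n + 1))) (not_le.2 hxV.1)
  exact ⟨hxn, hxV⟩

variable [TopologicalSpace X] [OrderClosedTopology X]

theorem iteratedDerivedSet_biUnion_of_subset_Icc (hu : StrictAnti u)
    (hC : ∀ n, C n ⊆ Icc (u (2 * n + 2)) (u (2 * n + 1))) (S : Set ℕ) (a : Ordinal) :
    (⋃ n ∈ S, C n)ᵈ[a] = ⋃ n ∈ S, (C n)ᵈ[a] := by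
  refine subset_antisymm (fun x hx => ?_)
    (iUnion₂_subset fun n hn => iteratedDerivedSet_mono (subset_biUnion_of_mem hn) a)
  obtain ⟨m, hm, hxm⟩ := mem_iUnion₂.1 (iteratedDerivedSet_subset a hx)
  have hxV : x ∈ Ioo (u (2 * m + 3)) (u (2 * m)) :=
    Icc_subset_Ioo (hu (by omega)) (hu (by omega)) (hC m hxm)
  have hxCm : x ∈ (C m)ᵈ[a] ∩ Ioo (u (2 * m + 3)) (u (2 * m)) := by
    rw [← iteratedDerivedSet_inter_of_isOpen isOpen_Ioo
      (biUnion_inter_Ioo_of_subset_Icc hu hC hm) a]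
    exact ⟨hx, hxV⟩
  exact mem_biUnion hm hxCm.1

end Windows

section Construction

variable {X : Type*} [LinearOrder X] [TopologicalSpace X] [OrderTopology X]

theorem iteratedDerivedSet_insert_iUnion_eq {x : X} {u : ℕ → X} (hu : StrictAnti u)
    (hux : Tendsto u atTop (𝓝 x)) {C : ℕ → Set X}
    (hC : ∀ n, C n ⊆ Icc (u (2 * n + 2)) (u (2 * n + 1))) {α : Ordinal} {f : ℕ → Ordinal}
    (hf : ∀ n, f n < α) (hfα : ∀ β < α, ∃ᶠ n in atTop, β ≤ f n)
    (hCf : ∀ n, (C n)ᵈ[f n] = {u (2 * n + 2)}) :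
    (insert x (⋃ n, C n))ᵈ[α] = {x} := by
  have hCα (n : ℕ) : (C n)ᵈ[α] = ∅ := by
    refine subset_empty_iff.1 <|
      (iteratedDerivedSet_antitone _ (Order.add_one_le_of_lt (hf n))).trans ?_
    rw [iteratedDerivedSet_succ, hCf, relDerivedSet_singleton]
  have hoff : (insert x (⋃ n, C n))ᵈ[α] ∩ {x}ᶜ = ∅ := by
    rw [iteratedDerivedSet_inter_of_isOpen isOpen_compl_singleton
      (t := ⋃ n ∈ Set.univ, C n) ?_ α, iteratedDerivedSet_biUnion_of_subset_Icc hu hC]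
    · simp [hCα]
    rw [biUnion_univ]
    ext y
    by_cases y = x <;> simp_all
  refine subset_antisymm (fun y hy => by_contra fun hyx => hoff.subset ⟨hy, hyx⟩) ?_
  have hxu (n : ℕ) : x < u n :=
    (hu.antitone.le_of_tendsto hux (n + 1)).trans_lt (hu n.lt_add_one)
  have hux' : Tendsto (fun n => u (2 * n + 2)) atTop (𝓝 x) :=
    hux.comp (tendsto_atTop_mono (fun n => (by omega : n ≤ 2 * n + 2)) tendsto_id)
  rw [singleton_subset_iff, mem_iteratedDerivedSet_iff]
  refine ⟨mem_insert x _, fun β hβ => mem_derivedSet_of_tendsto hux' (fun n => (hxu _).ne') ?_⟩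
  refine (hfα β hβ).mono fun n hn => iteratedDerivedSet_mono
    ((subset_iUnion C n).trans (subset_insert x _)) β (iteratedDerivedSet_antitone _ hn ?_)
  rw [hCf]
  rfl

variable [DenselyOrdered X] [FirstCountableTopology X]

theorem exists_isCompact_iteratedDerivedSet_eq_singleton {α : Ordinal} (hα : α < ω₁) {a b : X}
    (hab : a < b) : ∃ K ⊆ Icc a b, IsCompact K ∧ K.Countable ∧ Kᵈ[α] = {a} := by
  induction α using WellFoundedLT.induction generalizing a b with | _ α ih =>
  rcases eq_or_ne α 0 with rfl | hα0
  · exact ⟨{a}, by simp [hab.le], isCompact_singleton, countable_singleton a, by simp⟩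
  have := (countable_Iio_of_lt_omega_one hα).to_subtype
  have : Nonempty (Iio α) := ⟨⟨0, pos_iff_ne_zero.2 hα0⟩⟩
  obtain ⟨f, hf⟩ := exists_seq_frequently_eq (Iio α)
  obtain ⟨u, hu, huab, hua⟩ := exists_seq_strictAnti_tendsto' hab
  choose C hCu hC hCcount hCf using fun n =>
    ih (f n) (f n).2 ((f n).2.trans hα) (hu (by omega : 2 * n + 1 < 2 * n + 2))
  have hsmall : Tendsto C atTop (𝓝 a).smallSets := by
    have hlo := hua.comp (tendsto_atTop_mono (fun n => by omega : ∀ n, n ≤ 2 * n + 2) tendsto_id)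
    have hhi := hua.comp (tendsto_atTop_mono (fun n => by omega : ∀ n, n ≤ 2 * n + 1) tendsto_id)
    exact (hlo.Icc hhi).smallSets_mono (Eventually.of_forall hCu)
  refine ⟨insert a (⋃ n, C n), insert_subset (left_mem_Icc.2 hab.le) (iUnion_subset fun n =>
      (hCu n).trans (Icc_subset_Icc (huab _).1.le (huab _).2.le)),
    isCompact_insert_iUnion hC hsmall, (countable_iUnion hCcount).insert a,
    iteratedDerivedSet_insert_iUnion_eq hu hua hCu (fun n => (f n).2) (fun β hβ => ?_) hCf⟩
  exact (hf ⟨β, hβ⟩).mono fun n hn => by rw [hn]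

end Construction

theorem stmt16 (α : Ordinal) (hαcount : α < ω_ 1) (p : ℕ) :
    ∃ K : Set ℚ, IsCompact K ∧ K.Countable ∧
      (cbDeriv K α).Finite ∧ (cbDeriv K α).ncard = p := by
  -- `Kᵈ[·]` for `K : Set ℚ` is indexed by `Ordinal.{0}`, so `α` is first brought down.
  obtain ⟨β, hβ, rfl⟩ := lt_lift_iff.{0}.1 (by simpa using hαcount : α < lift ω₁)
  obtain ⟨u, hu, -, -⟩ := exists_seq_strictAnti_tendsto' (zero_lt_one' ℚ)
  choose C hCu hC hCcount hCα using fun n => exists_isCompact_iteratedDerivedSet_eq_singleton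
    hβ (hu (by omega : 2 * n + 1 < 2 * n + 2))
  have hK : IsCompact (⋃ n ∈ Iio p, C n) := (finite_Iio p).isCompact_biUnion fun n _ => hC n
  have hKα : cbDeriv (⋃ n ∈ Iio p, C n) (lift β) = (fun n => u (2 * n + 2)) '' Iio p := by
    rw [cbDeriv_lift, cbDeriv_eq_iteratedDerivedSet hK.isClosed,
      iteratedDerivedSet_biUnion_of_subset_Icc hu hCu, image_eq_iUnion]
    simp only [hCα]
  have hinj : Function.Injective fun n => u (2 * n + 2) := hu.injective.comp fun a b h => by omega
  refine ⟨_, hK, (finite_Iio p).countable.biUnion fun n _ => hCcount n, ?_, ?_⟩ <;> rw [hKα]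
  · exact (finite_Iio p).image _
  · rw [ncard_image_of_injective _ hinj, ← Finset.coe_range,
      ncard_coe_finset, Finset.card_range]
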